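/- arXiv:2001.08453 — 2 statements merged into one kernel-verified Lean document; each statement's English description precedes it below -/
import Mathlib

section
/- If Σ admits a Mal'cev term, i.e. a ternary term m with Σ ⊢ m(x, y, y) ≈ x and Σ ⊢ m(x, x, y) ≈ y, then the free-algebra functor F_Σ weakly preserves kernel pairs: for every surjective map f : X → Y with kernel pair K = {(x, x') ∈ X × X : f(x) = f(x')} and projections π₁, π₂ : K → X, and any p, q ∈ F_Σ(X) with (F_Σ f)(p) = (F_Σ f)(q), there exists w ∈ F_Σ(K) with (F_Σ π₁)(w) = p and (F_Σ π₂)(w) = q. -/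
universe u

/-- A finitary algebraic signature. -/
structure Sig where
  ops : Type
  ar : ops → ℕ

namespace UA

/-- Terms over the signature `S` with variables from `X`. -/
inductive Term (S : Sig) (X : Type) : Type where
  | var : X → Term S X
  | app : (o : S.ops) → (Fin (S.ar o) → Term S X) → Term S X

/-- Simultaneous substitution of terms for variables. -/
def Term.subst {S : Sig} {X Y : Type} (σ : X → Term S Y) : Term S X → Term S Y
  | .var x => σ x
  | .app o ts => .app o fun i => (ts i).subst σ

/-- Renaming (substitution of variables for variables). -/
def Term.rename {S : Sig} {X Y : Type} (φ : X → Y) (t : Term S X) : Term S Y :=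
  t.subst fun x => .var (φ x)

/-- Equational provability from the set `Γ` of axioms (pairs of terms over the
countable variable set `ℕ`), over arbitrary variable sets. -/
inductive Eqv {S : Sig} (Γ : Set (Term S ℕ × Term S ℕ)) :
    {X : Type} → Term S X → Term S X → Prop where
  | axm {X : Type} {l r : Term S ℕ} (h : (l, r) ∈ Γ) (σ : ℕ → Term S X) :
      Eqv Γ (l.subst σ) (r.subst σ)
  | refl {X : Type} (t : Term S X) : Eqv Γ t t
  | symm {X : Type} {t u : Term S X} : Eqv Γ t u → Eqv Γ u t
  | trans {X : Type} {t u v : Term S X} : Eqv Γ t u → Eqv Γ u v → Eqv Γ t v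
  | congr {X : Type} (o : S.ops) {ts us : Fin (S.ar o) → Term S X} :
      (∀ i, Eqv Γ (ts i) (us i)) → Eqv Γ (.app o ts) (.app o us)
  | sbst {X Y : Type} {t u : Term S X} (σ : X → Term S Y) :
      Eqv Γ t u → Eqv Γ (t.subst σ) (u.subst σ)

def termSetoid {S : Sig} (Γ : Set (Term S ℕ × Term S ℕ)) (X : Type) : Setoid (Term S X) :=
  ⟨Eqv Γ, ⟨fun t => .refl t, fun h => h.symm, fun h h' => h.trans h'⟩⟩

/-- The free algebra over the variable set `X` in the variety axiomatized by `Γ`: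
terms modulo `Γ`-provable equality.  This is the object part of the free-algebra
functor `F_Σ`. -/
def FreeAlg {S : Sig} (Γ : Set (Term S ℕ × Term S ℕ)) (X : Type) : Type :=
  Quotient (termSetoid Γ X)

/-- The action of the free-algebra functor `F_Σ` on maps: variable substitution. -/
def FreeAlg.map {S : Sig} {Γ : Set (Term S ℕ × Term S ℕ)} {X Y : Type} (φ : X → Y) :
    FreeAlg Γ X → FreeAlg Γ Y :=
  Quotient.map (Term.rename φ) fun _ _ h => h.sbst _

end UA

/-!
Pick terms `P`, `Q` representing `p`, `q` and let `s = g ∘ f` for a section `g` of `f`.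
Over the kernel pair, the terms `P(x, s x)`, `P(s x, s x)` and `Q(s x, x)` have first
projections `P, P ∘ s, Q ∘ s` and second projections `P ∘ s, P ∘ s, Q`. Since `P ∘ f ≈ Q ∘ f`
gives `P ∘ s ≈ Q ∘ s`, applying the Mal'cev term `m` to these three terms yields a term whose
projections are `m(P, P ∘ s, P ∘ s) ≈ P` and `m(P ∘ s, P ∘ s, Q) ≈ Q`.
-/

namespace UA

variable {S : Sig}

namespace Term

lemma subst_rename {X Y Z : Type} (φ : X → Y) (σ : Y → Term S Z) (t : Term S X) :
    (t.rename φ).subst σ = t.subst (fun x => σ (φ x)) := by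
  induction t with
  | var x => rfl
  | app o ts ih => exact congrArg (app o) (funext ih)

lemma rename_subst {X Y Z : Type} (σ : X → Term S Y) (φ : Y → Z) (t : Term S X) :
    (t.subst σ).rename φ = t.subst (fun x => (σ x).rename φ) := by
  induction t with
  | var x => rfl
  | app o ts ih => exact congrArg (app o) (funext ih)

lemma rename_rename {X Y Z : Type} (φ : X → Y) (ψ : Y → Z) (t : Term S X) :
    (t.rename φ).rename ψ = t.rename (fun x => ψ (φ x)) :=
  subst_rename φ _ t

lemma rename_id {X : Type} (t : Term S X) : t.rename (fun x => x) = t := by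
  induction t with
  | var x => rfl
  | app o ts ih => exact congrArg (app o) (funext ih)

end Term

namespace Eqv

variable {Γ : Set (Term S ℕ × Term S ℕ)}

lemma rename {X Y : Type} {t u : Term S X} (φ : X → Y) (h : Eqv Γ t u) :
    Eqv Γ (t.rename φ) (u.rename φ) :=
  h.sbst _

lemma subst_congr {X Y : Type} (t : Term S X) {σ τ : X → Term S Y}
    (h : ∀ x, Eqv Γ (σ x) (τ x)) : Eqv Γ (t.subst σ) (t.subst τ) := by
  induction t with
  | var x => exact h x
  | app o ts ih => exact congr o ih

lemma subst_of_rename {X Y Z : Type} {t : Term S X} {u : Term S Y} {φ : X → Y}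
    (h : Eqv Γ (t.rename φ) u) {σ : X → Term S Z} {τ : Y → Term S Z}
    (hστ : ∀ x, Eqv Γ (σ x) (τ (φ x))) : Eqv Γ (t.subst σ) (u.subst τ) := by
  have := h.sbst τ
  rw [Term.subst_rename] at this
  exact (subst_congr t hστ).trans this

variable {m : Term S (Fin 3)}

lemma malcev_left (hm : Eqv Γ (m.rename ![0, 1, 1]) (Term.var 0 : Term S ℕ))
    {Z : Type} (σ : Fin 3 → Term S Z) (h : Eqv Γ (σ 1) (σ 2)) :
    Eqv Γ (m.subst σ) (σ 0) :=
  subst_of_rename (τ := fun n => if n = 0 then σ 0 else σ 1) hm fun i => by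
    fin_cases i
    exacts [refl _, refl _, h.symm]

lemma malcev_right (hm : Eqv Γ (m.rename ![0, 0, 1]) (Term.var 1 : Term S ℕ))
    {Z : Type} (σ : Fin 3 → Term S Z) (h : Eqv Γ (σ 0) (σ 1)) :
    Eqv Γ (m.subst σ) (σ 2) :=
  subst_of_rename (τ := fun n => if n = 0 then σ 1 else σ 2) hm fun i => by
    fin_cases i
    exacts [h, refl _, refl _]

end Eqv

lemma exists_kernelPair_lift {Γ : Set (Term S ℕ × Term S ℕ)} {m : Term S (Fin 3)}
    (hm₁ : Eqv Γ (m.rename ![0, 1, 1]) (Term.var 0 : Term S ℕ))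
    (hm₂ : Eqv Γ (m.rename ![0, 0, 1]) (Term.var 1 : Term S ℕ))
    {X Y : Type} {f : X → Y} (s : X → X) (hs : ∀ x, f (s x) = f x) {P Q : Term S X}
    (hPQ : Eqv Γ (P.rename s) (Q.rename s)) :
    ∃ W : Term S {xy : X × X // f xy.1 = f xy.2},
      Eqv Γ (W.rename fun k => k.1.1) P ∧ Eqv Γ (W.rename fun k => k.1.2) Q := by
  refine ⟨m.subst ![P.rename fun x => ⟨(x, s x), (hs x).symm⟩,
    P.rename fun x => ⟨(s x, s x), rfl⟩, Q.rename fun x => ⟨(s x, x), hs x⟩], ?_, ?_⟩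
  · rw [Term.rename_subst]
    convert hm₁.malcev_left _ ?_ using 1
    all_goals simp [Term.rename_rename, Term.rename_id, hPQ]
  · rw [Term.rename_subst]
    convert hm₂.malcev_right _ ?_ using 1
    all_goals simp [Term.rename_rename, Term.rename_id, Eqv.refl]

/-- If the variety of `Γ` has a Mal'cev term `m` (with `m(x,y,y) ≈ x` and
`m(x,x,y) ≈ y`), then the free-algebra functor `F_Σ` weakly preserves kernel
pairs: for every surjective `f : X → Y` and `p, q ∈ F_Σ X` with
`(F_Σ f) p = (F_Σ f) q` there is a `w ∈ F_Σ K` over the kernel pair `K` of `f`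
projecting to `p` and `q`. -/
theorem malcev_implies_weakly_preserves_kernel_pairs
    (Γ : Set (Term S ℕ × Term S ℕ)) (m : Term S (Fin 3))
    (hm₁ : Eqv Γ (m.rename ![0, 1, 1]) (Term.var 0 : Term S ℕ))
    (hm₂ : Eqv Γ (m.rename ![0, 0, 1]) (Term.var 1 : Term S ℕ))
    {X Y : Type} (f : X → Y) (hf : Function.Surjective f)
    (p q : FreeAlg Γ X) (h : FreeAlg.map f p = FreeAlg.map f q) :
    ∃ w : FreeAlg Γ {xy : X × X // f xy.1 = f xy.2},
      FreeAlg.map (fun k => k.1.1) w = p ∧ FreeAlg.map (fun k => k.1.2) w = q := by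
  obtain ⟨P, rfl⟩ := Quotient.exists_rep p
  obtain ⟨Q, rfl⟩ := Quotient.exists_rep q
  have hPQ : Eqv Γ (P.rename f) (Q.rename f) := Quotient.exact h
  let g := Function.surjInv hf
  have hgf : ∀ x, f (g (f x)) = f x := fun x => Function.surjInv_eq hf (f x)
  have hPQ' : Eqv Γ (P.rename fun x => g (f x)) (Q.rename fun x => g (f x)) := by
    simpa only [Term.rename_rename] using hPQ.rename g
  obtain ⟨W, hW₁, hW₂⟩ := exists_kernelPair_lift hm₁ hm₂ _ hgf hPQ'
  exact ⟨⟦W⟧, Quotient.sound hW₁, Quotient.sound hW₂⟩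

end UA
end

section
/- Let V(Σ) be n-permutable for some n > 2, witnessed by Hagemann–Mitschke terms p₁,...,p_{n-1} satisfying x ≈ p₁(x,y,y), p_i(x,x,y) ≈ p_{i+1}(x,y,y) for 0 < i < n-1, and p_{n-1}(x,x,y) ≈ y. If additionally there exists a quaternary term s with Σ ⊢ p₁(x,y,z) ≈ s(x,y,z,z) and Σ ⊢ p₂(x,y,z) ≈ s(x,x,y,z), then V(Σ) is (n-1)-permutable: there exist terms m, p₃, ..., p_{n-1} satisfying the Hagemann–Mitschke chain of length n-1, where m(x,y,z) := s(x,y,y,z). -/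
universe u

namespace UA

variable {S : Sig}

/-- The Hagemann–Mitschke chain witnessing `n`-permutability: ternary terms
`p 1, …, p (n-1)` with `x ≈ p₁(x,y,y)`, `pᵢ(x,x,y) ≈ pᵢ₊₁(x,y,y)` for `0 < i < n-1`
and `pₙ₋₁(x,x,y) ≈ y`. -/
def HMChain (Γ : Set (Term S ℕ × Term S ℕ)) (n : ℕ) (p : ℕ → Term S (Fin 3)) : Prop :=
  Eqv Γ (Term.var 0 : Term S ℕ) ((p 1).rename ![0, 1, 1]) ∧
  (∀ i, 0 < i → i < n - 1 →
    Eqv Γ ((p i).rename ![0, 0, 1]) ((p (i + 1)).rename ![0, 1, 1] : Term S ℕ)) ∧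
  Eqv Γ ((p (n - 1)).rename ![0, 0, 1]) (Term.var 1 : Term S ℕ)

theorem Term.subst_subst {X Y Z : Type} (σ : X → Term S Y) (τ : Y → Term S Z)
    (t : Term S X) : (t.subst σ).subst τ = t.subst (fun x => (σ x).subst τ) := by
  induction t with
  | var x => rfl
  | app o ts ih => exact congrArg (Term.app o) (funext ih)

theorem Term.rename_rename_s14 {X Y Z : Type} (φ : X → Y) (ψ : Y → Z) (t : Term S X) :
    (t.rename φ).rename ψ = t.rename (ψ ∘ φ) :=
  Term.subst_subst _ _ t

theorem Eqv.rename_comp {Γ : Set (Term S ℕ × Term S ℕ)} {X Y Z W : Type}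
    {t : Term S X} {u : Term S Y} {φ : X → Z} {ψ : Y → Z} (χ : Z → W)
    {φ' : X → W} {ψ' : Y → W} (hφ : χ ∘ φ = φ') (hψ : χ ∘ ψ = ψ')
    (h : Eqv Γ (t.rename φ) (u.rename ψ)) : Eqv Γ (t.rename φ') (u.rename ψ') := by
  have h' := h.sbst fun z => .var (χ z)
  rwa [← Term.rename, ← Term.rename, Term.rename_rename_s14, Term.rename_rename_s14, hφ, hψ] at h'

/-- The chain `m, p₃, p₄, …`: the links `p₁, p₂` of a Hagemann–Mitschke chain merged into `m`. -/
def mergeHead (m : Term S (Fin 3)) (p : ℕ → Term S (Fin 3)) : ℕ → Term S (Fin 3)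
  | i + 2 => p (i + 3)
  | _ => m

theorem HMChain.mergeHead {Γ : Set (Term S ℕ × Term S ℕ)} {n : ℕ} {p : ℕ → Term S (Fin 3)}
    (hp : HMChain Γ n p) (hn : 2 < n) {m : Term S (Fin 3)}
    (h₁ : Eqv Γ ((p 1).rename ![0, 1, 1]) (m.rename ![0, 1, 1] : Term S ℕ))
    (h₂ : Eqv Γ (m.rename ![0, 0, 1]) ((p 2).rename ![0, 0, 1] : Term S ℕ)) :
    HMChain Γ (n - 1) (UA.mergeHead m p) := by
  obtain ⟨hhead, hlink, hlast⟩ := hp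
  obtain ⟨k, rfl⟩ : ∃ k, n = k + 3 := ⟨n - 3, by omega⟩
  refine ⟨hhead.trans h₁, ?_, ?_⟩
  · rintro (_ | _ | i) hi₀ hi
    · omega
    · exact h₂.trans (hlink 2 (by omega) (by omega))
    · exact hlink (i + 3) (by omega) (by omega)
  · rcases k with _ | k
    · exact h₂.trans hlast
    · exact hlast

/-- Chain shortening: if `V(Σ)` is `n`-permutable (`n > 2`) via Hagemann–Mitschke
terms `p₁, …, pₙ₋₁` and there is a quaternary term `s` with
`Σ ⊢ p₁(x,y,z) ≈ s(x,y,z,z)` and `Σ ⊢ p₂(x,y,z) ≈ s(x,x,y,z)`, then `V(Σ)` is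
`(n-1)`-permutable, with first term `m(x,y,z) := s(x,y,y,z)`. -/
theorem chain_shortening
    (Γ : Set (Term S ℕ × Term S ℕ)) (n : ℕ) (hn : 2 < n)
    (p : ℕ → Term S (Fin 3)) (hp : HMChain Γ n p)
    (s : Term S (Fin 4))
    (hs₁ : Eqv Γ ((p 1).rename ![0, 1, 2]) (s.rename ![0, 1, 2, 2] : Term S ℕ))
    (hs₂ : Eqv Γ ((p 2).rename ![0, 1, 2]) (s.rename ![0, 0, 1, 2] : Term S ℕ)) :
    ∃ q : ℕ → Term S (Fin 3),
      q 1 = s.rename ![0, 1, 1, 2] ∧ HMChain Γ (n - 1) q := by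
  refine ⟨mergeHead (s.rename ![0, 1, 1, 2]) p, rfl, hp.mergeHead hn ?_ ?_⟩
  -- `p₁(x,y,y) ≈ s(x,y,y,y)`: put `z := y` in `hs₁`
  · rw [Term.rename_rename_s14]
    exact hs₁.rename_comp (fun k => min k 1) (by decide) (by decide)
  -- `s(x,x,x,y) ≈ p₂(x,x,y)`: put `y := x` in `hs₂`
  · rw [Term.rename_rename_s14]
    exact hs₂.symm.rename_comp (fun k => k - 1) (by decide) (by decide)

end UA
end
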